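/- Let R > 0 and let x ∈ ℝ² with ‖x‖ < 1. Define the spherical (conformal) Hessian of ρ_R at x as the bilinear form S(x)(y,z) := D²ρ_R(x)(y,z) − ⟪∇φ_R(x),y⟫·⟪∇ρ_R(x),z⟫ − ⟪∇φ_R(x),z⟫·⟪∇ρ_R(x),y⟫ + ⟪∇φ_R(x),∇ρ_R(x)⟫·⟪y,z⟫. Then: (i) for every y ∈ ℝ² with ⟪x,y⟫ = 0 one has S(x)(y,y) = μ₁(x)·‖y‖² where μ₁(x) = 4(1+R²)(R²−‖x‖²)/(R⁴(1−‖x‖²)³); and (ii) S(x)(x,x) = μ₂(x)·‖x‖² where μ₂(x) = 4(1+R²)(‖x‖²(5+‖x‖²) + R²(1+5‖x‖²))/(R⁴(1−‖x‖²)⁴). -/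

import Mathlib

open scoped RealInnerProductSpace

/-- The weight from the Poincaré disk model rewritten over the stereographic chart
of the sphere of radius `R`. -/
noncomputable def rhoR (R : ℝ) (x : EuclideanSpace ℝ (Fin 2)) : ℝ :=
  (R ^ 2 + ‖x‖ ^ 2) ^ 2 / (R ^ 4 * (1 - ‖x‖ ^ 2) ^ 2)

/-- The conformal factor of the spherical metric of radius `R` in stereographic
coordinates. -/
noncomputable def phiR (R : ℝ) (x : EuclideanSpace ℝ (Fin 2)) : ℝ :=
  Real.log (2 * R ^ 2 / (R ^ 2 + ‖x‖ ^ 2))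

/-- The Hessian of `rhoR` with respect to the conformal (spherical) metric,
computed via `Hess_g̃ F = Hess_g F − 2 dφ ⊗ dF + (∇φ·∇F) g`. -/
noncomputable def sphericalHess (R : ℝ) (x y z : EuclideanSpace ℝ (Fin 2)) : ℝ :=
  fderiv ℝ (fderiv ℝ (rhoR R)) x y z -
    ⟪gradient (phiR R) x, y⟫ * ⟪gradient (rhoR R) x, z⟫ -
    ⟪gradient (phiR R) x, z⟫ * ⟪gradient (rhoR R) x, y⟫ +
    ⟪gradient (phiR R) x, gradient (rhoR R) x⟫ * ⟪y, z⟫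

/-!
Both `ρ_R` and `φ_R` are radial, `F(x) = f(‖x‖²)`, so `∇F(x) = 2 f'(‖x‖²) x` and
`D²F(x)(y, z) = 4 f''(‖x‖²) ⟪x, y⟫ ⟪x, z⟫ + 2 f'(‖x‖²) ⟪y, z⟫`. Hence the spherical Hessian
has the form `α ⟪x, y⟫ ⟪x, z⟫ + μ₁ ⟪y, z⟫`: it is `μ₁` on `x^⊥`, and `μ₂ = α ‖x‖² + μ₁` in the
direction of `x`. The coefficient `α` simplifies to `24 (1 + R²)² / (R⁴ (1 - ‖x‖²)⁴)`.
-/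

open Filter Topology

theorem norm_sq_ne_one {E : Type*} [SeminormedAddCommGroup E] {x : E} (hx : ‖x‖ < 1) :
    ‖x‖ ^ 2 ≠ 1 :=
  (pow_lt_one₀ (norm_nonneg x) hx two_ne_zero).ne

section Radial

variable {E : Type*} [NormedAddCommGroup E] [InnerProductSpace ℝ E] {f f' : ℝ → ℝ} {d f'' : ℝ}
  {x : E}

theorem HasDerivAt.hasFDerivAt_comp_norm_sq (hf : HasDerivAt f d (‖x‖ ^ 2)) :
    HasFDerivAt (fun v : E => f (‖v‖ ^ 2)) ((2 * d) • innerSL ℝ x) x := by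
  refine (hf.comp_hasFDerivAt x (hasStrictFDerivAt_norm_sq x).hasFDerivAt).congr_fderiv ?_
  ext y
  simp
  ring

theorem HasDerivAt.hasGradientAt_comp_norm_sq [CompleteSpace E] (hf : HasDerivAt f d (‖x‖ ^ 2)) :
    HasGradientAt (fun v : E => f (‖v‖ ^ 2)) ((2 * d) • x) x := by
  rw [hasGradientAt_iff_hasFDerivAt, map_smul]
  exact hf.hasFDerivAt_comp_norm_sq

theorem fderiv_fderiv_comp_norm_sq_apply (hf : ∀ᶠ t in 𝓝 (‖x‖ ^ 2), HasDerivAt f (f' t) t)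
    (hf' : HasDerivAt f' f'' (‖x‖ ^ 2)) (y z : E) :
    fderiv ℝ (fderiv ℝ fun v : E => f (‖v‖ ^ 2)) x y z =
      4 * f'' * ⟪x, y⟫ * ⟪x, z⟫ + 2 * f' (‖x‖ ^ 2) * ⟪y, z⟫ := by
  have hfderiv : fderiv ℝ (fun v : E => f (‖v‖ ^ 2)) =ᶠ[𝓝 x]
      fun v => (2 * f' (‖v‖ ^ 2)) • innerSL ℝ v := by
    have hcont : ContinuousAt (fun v : E => ‖v‖ ^ 2) x := by fun_prop
    filter_upwards [hcont.eventually hf] with v hv using hv.hasFDerivAt_comp_norm_sq.fderiv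
  have hcoef : HasFDerivAt (fun v : E => 2 * f' (‖v‖ ^ 2)) ((2 * (2 * f'')) • innerSL ℝ x) x :=
    (hf'.const_mul 2).hasFDerivAt_comp_norm_sq
  rw [hfderiv.fderiv_eq, (hcoef.fun_smul (innerSL ℝ).hasFDerivAt).fderiv]
  simp
  -- `innerSL` is conjugate-linear, so its coercion here is not syntactically the one `simp` expects
  erw [innerSL_apply_apply, innerSL_apply_apply]
  ring

end Radial

section Profiles

variable {R s : ℝ}

theorem hasDerivAt_rhoR_profile (hR : R ≠ 0) (hs : s ≠ 1) :
    HasDerivAt (fun t : ℝ => (R ^ 2 + t) ^ 2 / (R ^ 4 * (1 - t) ^ 2))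
      (2 * (1 + R ^ 2) * (R ^ 2 + s) / (R ^ 4 * (1 - s) ^ 3)) s := by
  have hnum := ((hasDerivAt_id' s).const_add (R ^ 2)).fun_pow 2
  have hden := (((hasDerivAt_id' s).const_sub 1).fun_pow 2).const_mul (R ^ 4)
  refine (hnum.fun_div hden (by positivity)).congr_deriv ?_
  field_simp
  ring

theorem hasDerivAt_rhoR_profile_deriv (hR : R ≠ 0) (hs : s ≠ 1) :
    HasDerivAt (fun t : ℝ => 2 * (1 + R ^ 2) * (R ^ 2 + t) / (R ^ 4 * (1 - t) ^ 3))
      (2 * (1 + R ^ 2) * (1 + 3 * R ^ 2 + 2 * s) / (R ^ 4 * (1 - s) ^ 4)) s := by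
  have hnum := ((hasDerivAt_id' s).const_add (R ^ 2)).const_mul (2 * (1 + R ^ 2))
  have hden := (((hasDerivAt_id' s).const_sub 1).fun_pow 3).const_mul (R ^ 4)
  refine (hnum.fun_div hden (by positivity)).congr_deriv ?_
  field_simp
  ring

theorem hasDerivAt_phiR_profile (hR : R ≠ 0) (hs : 0 ≤ s) :
    HasDerivAt (fun t : ℝ => Real.log (2 * R ^ 2 / (R ^ 2 + t))) (-1 / (R ^ 2 + s)) s := by
  have hRs : R ^ 2 + s ≠ 0 := by positivity
  have hquot := (hasDerivAt_const s (2 * R ^ 2)).fun_div ((hasDerivAt_id' s).const_add (R ^ 2)) hRs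
  refine (hquot.log (by positivity)).congr_deriv ?_
  field_simp
  ring

end Profiles

section Spherical

variable {R : ℝ} {x : EuclideanSpace ℝ (Fin 2)}

theorem gradient_rhoR (hR : R ≠ 0) (hx : ‖x‖ < 1) :
    gradient (rhoR R) x =
      (4 * (1 + R ^ 2) * (R ^ 2 + ‖x‖ ^ 2) / (R ^ 4 * (1 - ‖x‖ ^ 2) ^ 3)) • x := by
  unfold rhoR
  rw [(hasDerivAt_rhoR_profile hR (norm_sq_ne_one hx)).hasGradientAt_comp_norm_sq.gradient]
  ring_nf

theorem gradient_phiR (hR : R ≠ 0) : gradient (phiR R) x = (-2 / (R ^ 2 + ‖x‖ ^ 2)) • x := by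
  unfold phiR
  rw [(hasDerivAt_phiR_profile hR (sq_nonneg ‖x‖)).hasGradientAt_comp_norm_sq.gradient]
  ring_nf

theorem fderiv_fderiv_rhoR_apply (hR : R ≠ 0) (hx : ‖x‖ < 1) (y z : EuclideanSpace ℝ (Fin 2)) :
    fderiv ℝ (fderiv ℝ (rhoR R)) x y z =
      8 * (1 + R ^ 2) * (1 + 3 * R ^ 2 + 2 * ‖x‖ ^ 2) / (R ^ 4 * (1 - ‖x‖ ^ 2) ^ 4) *
          ⟪x, y⟫ * ⟪x, z⟫ +
        4 * (1 + R ^ 2) * (R ^ 2 + ‖x‖ ^ 2) / (R ^ 4 * (1 - ‖x‖ ^ 2) ^ 3) * ⟪y, z⟫ := by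
  have hderiv : ∀ᶠ t in 𝓝 (‖x‖ ^ 2),
      HasDerivAt (fun t : ℝ => (R ^ 2 + t) ^ 2 / (R ^ 4 * (1 - t) ^ 2))
        (2 * (1 + R ^ 2) * (R ^ 2 + t) / (R ^ 4 * (1 - t) ^ 3)) t := by
    filter_upwards [eventually_ne_nhds (norm_sq_ne_one hx)] with t ht
      using hasDerivAt_rhoR_profile hR ht
  unfold rhoR
  rw [fderiv_fderiv_comp_norm_sq_apply hderiv
    (hasDerivAt_rhoR_profile_deriv hR (norm_sq_ne_one hx)) y z]
  ring

theorem sphericalHess_apply (hR : R ≠ 0) (hx : ‖x‖ < 1) (y z : EuclideanSpace ℝ (Fin 2)) :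
    sphericalHess R x y z =
      24 * (1 + R ^ 2) ^ 2 / (R ^ 4 * (1 - ‖x‖ ^ 2) ^ 4) * ⟪x, y⟫ * ⟪x, z⟫ +
        4 * (1 + R ^ 2) * (R ^ 2 - ‖x‖ ^ 2) / (R ^ 4 * (1 - ‖x‖ ^ 2) ^ 3) * ⟪y, z⟫ := by
  have hs : ‖x‖ ^ 2 ≠ 1 := norm_sq_ne_one hx
  rw [sphericalHess, fderiv_fderiv_rhoR_apply hR hx, gradient_rhoR hR hx, gradient_phiR hR]
  simp only [real_inner_smul_left, real_inner_smul_right, real_inner_self_eq_norm_sq,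
    real_inner_comm x]
  field_simp
  ring

end Spherical

theorem spherical_hessian_eigenvalues (R : ℝ) (hR : 0 < R)
    (x : EuclideanSpace ℝ (Fin 2)) (hx : ‖x‖ < 1) :
    (∀ y : EuclideanSpace ℝ (Fin 2), ⟪x, y⟫ = 0 →
        sphericalHess R x y y =
          (4 * (1 + R ^ 2) * (R ^ 2 - ‖x‖ ^ 2) / (R ^ 4 * (1 - ‖x‖ ^ 2) ^ 3)) * ‖y‖ ^ 2) ∧
      sphericalHess R x x x =
        (4 * (1 + R ^ 2) * (‖x‖ ^ 2 * (5 + ‖x‖ ^ 2) + R ^ 2 * (1 + 5 * ‖x‖ ^ 2)) /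
            (R ^ 4 * (1 - ‖x‖ ^ 2) ^ 4)) * ‖x‖ ^ 2 := by
  have hs : ‖x‖ ^ 2 ≠ 1 := norm_sq_ne_one hx
  refine ⟨fun y hxy => ?_, ?_⟩
  · rw [sphericalHess_apply hR.ne' hx, hxy, real_inner_self_eq_norm_sq]
    ring
  · rw [sphericalHess_apply hR.ne' hx, real_inner_self_eq_norm_sq]
    field_simp
    ring
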